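/- Let P ≥ 1, let n ≥ 1, and let T_A and T_B be tires of size n over [P_∞] := ZMod P ∪ {∞}. Define model matrices 𝓗_C := [T_A, T_B] and 𝓗_D := [−T_B^T, −T_A^T] (each of size n × 2n), where the minus operation is applied entrywise with −∞ = ∞. Let H_C and H_D be the associated binary QC-LDPC matrices with circulant permutation blocks of size P. Then H_C · H_D^T = 0 over F_2, i.e., the twisted condition (T) holds. -/
import Mathlib


open Matrix

/-- The circulant permutation matrix `I(b)` of size `P` over `F₂`. -/
def circPerm (P : ℕ) (b : ZMod P) : Matrix (Fin P) (Fin P) (ZMod 2) :=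
  Matrix.of fun j l => if ((l : ℕ) : ZMod P) - ((j : ℕ) : ZMod P) = b then 1 else 0

/-- `I(x)` for `x ∈ [P_∞]`, with `I(∞) = 0` (`∞` encoded as `none`). -/
def circPermO (P : ℕ) (x : Option (ZMod P)) : Matrix (Fin P) (Fin P) (ZMod 2) :=
  match x with
  | none => 0
  | some b => circPerm P b

/-- Negation on `[P_∞]`: computed mod `P` on `ZMod P`, and `−∞ = ∞`. -/
def oneg {P : ℕ} (x : Option (ZMod P)) : Option (ZMod P) :=
  x.map fun a => -a

/-- The QC-LDPC matrix associated with a model matrix over `[P_∞]`. -/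
def qcMatrix {P : ℕ} {R C : Type*} (c : R → C → Option (ZMod P)) :
    Matrix (R × Fin P) (C × Fin P) (ZMod 2) :=
  Matrix.of fun r s => circPermO P (c r.1 s.1) r.2 s.2

/-- A tire of size `n` over `[P_∞]`: a circulant `n × n` matrix whose `(j,l)`
entry equals `t ((l − j) mod n)` for some vector `t` over `[P_∞]`. -/
def IsTire {P n : ℕ} (T : Fin n → Fin n → Option (ZMod P)) : Prop :=
  ∃ t : ZMod n → Option (ZMod P),
    ∀ j l : Fin n, T j l = t (((l : ℕ) : ZMod n) - ((j : ℕ) : ZMod n))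

/-- Subtraction on `[P_∞]`. -/
def osub {P : ℕ} (x y : Option (ZMod P)) : Option (ZMod P) :=
  x.bind fun a => y.map fun b => a - b

lemma sum_fin_cast {n : ℕ} [NeZero n] {M : Type*} [AddCommMonoid M] (f : ZMod n → M) :
    ∑ r : Fin n, f ((r : ℕ) : ZMod n) = ∑ c : ZMod n, f c := by
  refine Fintype.sum_bijective (fun r : Fin n => ((r : ℕ) : ZMod n)) ?_ _ _ (fun _ => rfl)
  rw [Fintype.bijective_iff_injective_and_card]
  refine ⟨fun r s h => ?_, by simp [ZMod.card]⟩
  have := congrArg ZMod.val h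
  rwa [ZMod.val_natCast_of_lt r.2, ZMod.val_natCast_of_lt s.2, Fin.val_inj] at this

lemma circ_dot {P : ℕ} (hP : 1 ≤ P) (x y : Option (ZMod P)) (p q : Fin P) :
    ∑ r : Fin P, circPermO P x p r * circPermO P y q r
      = circPermO P (osub x y) p q := by
  haveI : NeZero P := ⟨by omega⟩
  cases x with
  | none => simp [circPermO, osub]
  | some a =>
    cases y with
    | none => simp [circPermO, osub]
    | some b =>
      simp only [circPermO, osub, Option.bind, Option.map, circPerm, of_apply]
      rw [sum_fin_cast
        (fun c => (if c - ((p : ℕ) : ZMod P) = a then (1 : ZMod 2) else 0) *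
          (if c - ((q : ℕ) : ZMod P) = b then 1 else 0))]
      have h1 : ∀ c : ZMod P, (c - ((p : ℕ) : ZMod P) = a) ↔ (c = a + ((p : ℕ) : ZMod P)) := by
        intro c; constructor <;> intro h <;> linear_combination h
      simp only [h1, ite_mul, one_mul, zero_mul]
      rw [Finset.sum_ite_eq' Finset.univ (a + ((p : ℕ) : ZMod P))
        (fun c => if c - ((q : ℕ) : ZMod P) = b then (1 : ZMod 2) else 0)]
      simp only [Finset.mem_univ, if_true]
      congr 1
      have : (a + ((p : ℕ) : ZMod P) - ((q : ℕ) : ZMod P) = b) ↔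
          (((q : ℕ) : ZMod P) - ((p : ℕ) : ZMod P) = a - b) := by
        constructor <;> intro h <;> linear_combination -h
      simp only [this]

lemma osub_oneg_comm {P : ℕ} (x y : Option (ZMod P)) :
    osub x (oneg y) = osub y (oneg x) := by
  cases x <;> cases y <;> simp [osub, oneg, sub_neg_eq_add, add_comm]

/-- for tires `T_A`, `T_B`, the QC-LDPC matrices associated with
the model matrices `𝓗_C = [T_A, T_B]` and `𝓗_D = [−T_Bᵀ, −T_Aᵀ]` satisfy the
twisted condition `H_C · H_Dᵀ = 0` over `F₂`. -/
theorem tires_satisfy_twisted (P n : ℕ) (hP : 1 ≤ P) (hn : 1 ≤ n)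
    (TA TB : Fin n → Fin n → Option (ZMod P)) (hA : IsTire TA) (hB : IsTire TB) :
    qcMatrix (fun j : Fin n => Sum.elim (fun l => TA j l) (fun l => TB j l)) *
      (qcMatrix (fun k : Fin n =>
        Sum.elim (fun l => oneg (TB l k)) (fun l => oneg (TA l k))))ᵀ = 0 := by
  haveI : NeZero P := ⟨by omega⟩
  haveI : NeZero n := ⟨by omega⟩
  obtain ⟨tA, hA⟩ := hA
  obtain ⟨tB, hB⟩ := hB
  ext ⟨j, p⟩ ⟨k, q⟩
  rw [Matrix.mul_apply]
  simp only [Matrix.zero_apply, transpose_apply, qcMatrix, of_apply]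
  rw [Fintype.sum_prod_type, Fintype.sum_sum_type]
  simp only [Sum.elim_inl, Sum.elim_inr, circ_dot hP, hA, hB]
  set jb : ZMod n := ((j : ℕ) : ZMod n)
  set kb : ZMod n := ((k : ℕ) : ZMod n)
  rw [sum_fin_cast (fun c => circPermO P (osub (tA (c - jb)) (oneg (tB (kb - c)))) p q),
    sum_fin_cast (fun c => circPermO P (osub (tB (c - jb)) (oneg (tA (kb - c)))) p q)]
  have h2 : ∑ c : ZMod n, circPermO P (osub (tB (c - jb)) (oneg (tA (kb - c)))) p q
      = ∑ c : ZMod n, circPermO P (osub (tA (c - jb)) (oneg (tB (kb - c)))) p q := by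
    refine Fintype.sum_equiv (Equiv.subLeft (jb + kb)) _ _ (fun c => ?_)
    rw [osub_oneg_comm]
    simp only [Equiv.subLeft_apply]
    ring_nf
  rw [h2]
  exact CharTwo.add_self_eq_zero _
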